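/- arXiv:2206.15016 — 6 statements merged into one kernel-verified Lean document; each statement's English description precedes it below -/
import Mathlib

section
/- Under the shortest-path-tree separator setup, let t ∈ V_N and let e be an edge of the primary path P. If some shortest path from s to t in G∖e (i.e., an s–t path in G∖e of length d_{G∖e}(s,t)) is jumping for e, then d_{G∖e}(s,t) = d_{G∖e}(s,r) + d_G(r,t). -/
open SimpleGraph

section Aux

variable {V : Type*} [DecidableEq V]

private lemma split_edist {G : SimpleGraph V} {u m v : V}
    (W₁ : G.Walk u m) (W₂ : G.Walk m v)
    (h : ((W₁.length : ℕ∞) + (W₂.length : ℕ∞)) = G.edist u v) :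
    (W₁.length : ℕ∞) = G.edist u m ∧ (W₂.length : ℕ∞) = G.edist m v := by
  have h1 : G.edist u m ≤ W₁.length := edist_le W₁
  have h2 : G.edist m v ≤ W₂.length := edist_le W₂
  have h3 : G.edist u v ≤ G.edist u m + G.edist m v := G.edist_triangle
  have hf1 : G.edist u m ≠ ⊤ := ne_top_of_le_ne_top (ENat.coe_ne_top _) h1
  have hf2 : G.edist m v ≠ ⊤ := ne_top_of_le_ne_top (ENat.coe_ne_top _) h2
  lift G.edist u m to ℕ using hf1 with a ha
  lift G.edist m v to ℕ using hf2 with b hb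
  rw [← h] at h3
  have h1' : a ≤ W₁.length := by exact_mod_cast h1
  have h2' : b ≤ W₂.length := by exact_mod_cast h2
  have h3' : W₁.length + W₂.length ≤ a + b := by exact_mod_cast h3
  constructor
  · exact_mod_cast (by omega : W₁.length = a)
  · exact_mod_cast (by omega : W₂.length = b)

private lemma tree_path_length {T : SimpleGraph V} (hT : T.IsTree) {u v : V}
    (Q : T.Walk u v) (hQ : Q.IsPath) : (Q.length : ℕ∞) = T.edist u v := by
  obtain ⟨W, hW⟩ := hT.isConnected.exists_walk_length_eq_edist u v
  have hQW : Q = W.bypass := ((hT.existsUnique_path u v).unique hQ W.bypass_isPath)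
  have hle : T.edist u v ≤ Q.length := edist_le Q
  have : (Q.length : ℕ∞) ≤ T.edist u v := by
    rw [hQW, ← hW]
    exact_mod_cast W.length_bypass_le
  exact le_antisymm this hle

private lemma support_subset_M {T : SimpleGraph V} {M N : T.Subgraph} {r : V}
    (hEunion : M.edgeSet ∪ N.edgeSet = T.edgeSet)
    (hVinter : M.verts ∩ N.verts = {r}) :
    ∀ {a b : V} (W : T.Walk a b), b = r → W.IsPath → a ∈ M.verts →
      ∀ z ∈ W.support, z ∈ M.verts := by
  intro a b W
  induction W with
  | nil =>
      intro _ _ ha z hz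
      simp only [SimpleGraph.Walk.support_nil, List.mem_singleton] at hz
      subst hz; exact ha
  | @cons a c b hadj W ih =>
      intro hbr hPath ha z hz
      rw [SimpleGraph.Walk.support_cons, List.mem_cons] at hz
      rcases hz with rfl | hz
      · exact ha
      · have hedge : s(a, c) ∈ T.edgeSet := hadj
        rw [← hEunion] at hedge
        rcases hedge with hM | hN
        · have hcM : c ∈ M.verts := (SimpleGraph.Subgraph.mem_edgeSet.mp hM).snd_mem
          exact ih hbr hPath.of_cons hcM z hz
        · have haN : a ∈ N.verts := (SimpleGraph.Subgraph.mem_edgeSet.mp hN).fst_mem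
          have har : a ∈ ({r} : Set V) := by rw [← hVinter]; exact ⟨ha, haN⟩
          rw [Set.mem_singleton_iff] at har
          exfalso
          have hnot : a ∉ W.support := ((SimpleGraph.Walk.cons_isPath_iff _ _).mp hPath).2
          subst hbr
          exact hnot (har ▸ W.end_mem_support)

private lemma r_mem_walk {T : SimpleGraph V} {M N : T.Subgraph} {r : V}
    (hEunion : M.edgeSet ∪ N.edgeSet = T.edgeSet)
    (hVinter : M.verts ∩ N.verts = {r}) :
    ∀ {a b : V} (W : T.Walk a b), a ∈ M.verts → b ∈ N.verts → r ∈ W.support := by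
  intro a b W
  induction W with
  | nil =>
      rename_i u
      intro ha hb
      have har : u ∈ ({r} : Set V) := by rw [← hVinter]; exact ⟨ha, hb⟩
      rw [Set.mem_singleton_iff] at har
      simp only [SimpleGraph.Walk.support_nil, List.mem_singleton]
      exact har.symm
  | @cons a c b hadj W ih =>
      intro ha hb
      have hedge : s(a, c) ∈ T.edgeSet := hadj
      rw [← hEunion] at hedge
      rcases hedge with hM | hN
      · have hcM : c ∈ M.verts := (SimpleGraph.Subgraph.mem_edgeSet.mp hM).snd_mem
        rw [SimpleGraph.Walk.support_cons]
        exact List.mem_cons_of_mem _ (ih hcM hb)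
      · have haN : a ∈ N.verts := (SimpleGraph.Subgraph.mem_edgeSet.mp hN).fst_mem
        have har : a ∈ ({r} : Set V) := by rw [← hVinter]; exact ⟨ha, haN⟩
        rw [Set.mem_singleton_iff] at har
        rw [SimpleGraph.Walk.support_cons]
        exact har ▸ List.mem_cons_self

private lemma edges_map_hom_mem {T : SimpleGraph V} (N : T.Subgraph) :
    ∀ {a b : N.verts} (p : N.coe.Walk a b), ∀ e ∈ (p.map N.hom).edges, e ∈ N.edgeSet := by
  intro a b p
  induction p with
  | nil => simp
  | @cons a c b hadj p ih =>
      intro e he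
      rw [SimpleGraph.Walk.map_cons, SimpleGraph.Walk.edges_cons, List.mem_cons] at he
      rcases he with rfl | he
      · exact SimpleGraph.Subgraph.mem_edgeSet.mpr hadj
      · exact ih e he

end Aux

/-- Under the shortest-path-tree separator setup, let `t ∈ V_N` and let
`e = {x,y}` (with upper endpoint `x`) be an edge of the primary path `P`.  If some shortest
path from `s` to `t` in `G∖e` is jumping for `e`, then
`d_{G∖e}(s,t) = d_{G∖e}(s,r) + d_G(r,t)`. -/
theorem stmt_3 {V : Type*} [Fintype V] (G : SimpleGraph V) (hG : G.Connected)
    (s r : V) (T : SimpleGraph V) (hTG : T ≤ G) (hT : T.IsTree)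
    (hSPT : ∀ v : V, T.edist s v = G.edist s v)
    (M N : T.Subgraph) (hMc : M.Connected) (hNc : N.Connected)
    (hEdisj : Disjoint M.edgeSet N.edgeSet)
    (hEunion : M.edgeSet ∪ N.edgeSet = T.edgeSet)
    (hVunion : M.verts ∪ N.verts = Set.univ)
    (hVinter : M.verts ∩ N.verts = {r})
    (hsM : s ∈ M.verts)
    (P : T.Walk s r) (hP : P.IsPath)
    (x y : V) (he : s(x, y) ∈ P.edges) (hxy : G.edist s x < G.edist s y)
    (t : V) (ht : t ∈ N.verts)
    (hjump : ∃ q : (G.deleteEdges {s(x, y)}).Walk s t, q.IsPath ∧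
        (q.length : ℕ∞) = (G.deleteEdges {s(x, y)}).edist s t ∧
        ∃ w ∈ q.support, w ∈ P.support ∧ G.edist s x < G.edist s w) :
    (G.deleteEdges {s(x, y)}).edist s t
      = (G.deleteEdges {s(x, y)}).edist s r + G.edist r t := by
  classical
  set G' := G.deleteEdges {s(x, y)} with hG'def
  have hrMN : r ∈ M.verts ∩ N.verts := by rw [hVinter]; rfl
  have hrM : r ∈ M.verts := hrMN.1
  have hrN : r ∈ N.verts := hrMN.2
  have heT : s(x, y) ∈ T.edgeSet := P.edges_subset_edgeSet he
  have hxney : x ≠ y := (T.mem_edgeSet.mp heT).ne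
  have heN : s(x, y) ∉ N.edgeSet := by
    intro hN
    have hsupM := support_subset_M hEunion hVinter P rfl hP hsM
    have hxM : x ∈ M.verts := hsupM x (P.fst_mem_support_of_mem_edges he)
    have hyM : y ∈ M.verts := hsupM y (P.snd_mem_support_of_mem_edges he)
    have hxN : x ∈ N.verts := (SimpleGraph.Subgraph.mem_edgeSet.mp hN).fst_mem
    have hyN : y ∈ N.verts := (SimpleGraph.Subgraph.mem_edgeSet.mp hN).snd_mem
    have hx' : x ∈ ({r} : Set V) := by rw [← hVinter]; exact ⟨hxM, hxN⟩
    have hy' : y ∈ ({r} : Set V) := by rw [← hVinter]; exact ⟨hyM, hyN⟩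
    rw [Set.mem_singleton_iff] at hx' hy'
    exact hxney (hx'.trans hy'.symm)
  have hTedge_mem : ∀ e ∈ T.edgeSet, e ≠ s(x, y) → e ∈ G'.edgeSet := by
    intro e heT' hne
    rw [hG'def, edgeSet_deleteEdges]
    exact ⟨edgeSet_mono hTG heT', by simpa using hne⟩
  have hlenP : (P.length : ℕ∞) = T.edist s r := tree_path_length hT P hP
  have hGfin : ∀ u v : V, G.edist u v ≠ ⊤ := fun u v =>
    edist_ne_top_iff_reachable.mpr (hG.preconnected u v)
  -- Step (i): G.edist s t = G.edist s r + T.edist r t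
  obtain ⟨Q, hQ⟩ := hT.isConnected.exists_walk_length_eq_edist s t
  have hrQ : r ∈ Q.support := r_mem_walk hEunion hVinter Q hsM ht
  have hQsplit : (((Q.takeUntil r hrQ).length : ℕ∞) + ((Q.dropUntil r hrQ).length : ℕ∞))
      = T.edist s t := by
    have hn : (Q.takeUntil r hrQ).length + (Q.dropUntil r hrQ).length = Q.length := by
      rw [← Walk.length_append, Q.take_spec hrQ]
    rw [← hQ, ← hn]; push_cast; ring
  obtain ⟨hQt, hQd⟩ := split_edist (Q.takeUntil r hrQ) (Q.dropUntil r hrQ) hQsplit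
  have key1 : G.edist s t = G.edist s r + T.edist r t := by
    rw [← hSPT t, ← hSPT r, ← hQt, ← hQd, hQsplit]
  have hanti : G.edist r t ≤ T.edist r t := edist_anti hTG
  have key2 : T.edist r t = G.edist r t := by
    refine le_antisymm ?_ hanti
    have h1 : G.edist s r + T.edist r t ≤ G.edist s r + G.edist r t := by
      rw [← key1]; exact G.edist_triangle
    exact (WithTop.add_le_add_iff_left (hGfin s r)).mp h1
  have key3 : G.edist s t = G.edist s r + G.edist r t := by rw [key1, key2]
  -- an r–t path in T using only N-edges, hence avoiding e
  obtain ⟨w0⟩ := hNc ⟨r, hrN⟩ ⟨t, ht⟩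
  have hW1N : ∀ e ∈ (w0.map N.hom).edges, e ∈ N.edgeSet := edges_map_hom_mem N w0
  have hRN : ∀ e ∈ (w0.map N.hom).bypass.edges, e ∈ N.edgeSet := fun e heq =>
    hW1N e ((w0.map N.hom).edges_bypass_subset heq)
  have hRlen : ((w0.map N.hom).bypass.length : ℕ∞) = T.edist r t :=
    tree_path_length hT (w0.map N.hom).bypass (w0.map N.hom).bypass_isPath
  have hRG' : ∀ e ∈ (w0.map N.hom).bypass.edges, e ∈ G'.edgeSet := by
    intro e heq
    refine hTedge_mem e (N.edgeSet_subset (hRN e heq)) ?_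
    rintro rfl
    exact heN (hRN _ heq)
  have hG'rt : G'.edist r t ≤ T.edist r t := by
    rw [← hRlen]
    have := edist_le ((w0.map N.hom).bypass.transfer G' hRG')
    rwa [Walk.length_transfer] at this
  have le_dir : G'.edist s t ≤ G'.edist s r + G.edist r t := by
    calc G'.edist s t ≤ G'.edist s r + G'.edist r t := G'.edist_triangle
      _ ≤ G'.edist s r + T.edist r t := add_le_add_right hG'rt _
      _ = G'.edist s r + G.edist r t := by rw [key2]
  -- ≥ direction
  obtain ⟨q, hqp, hqlen, w, hwq, hwP, hwgt⟩ := hjump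
  have hqsum : (((q.takeUntil w hwq).length : ℕ∞) + ((q.dropUntil w hwq).length : ℕ∞))
      = G'.edist s t := by
    have hn : (q.takeUntil w hwq).length + (q.dropUntil w hwq).length = q.length := by
      rw [← Walk.length_append, q.take_spec hwq]
    rw [← hqlen, ← hn]; push_cast; ring
  obtain ⟨hq1, hq2⟩ := split_edist (q.takeUntil w hwq) (q.dropUntil w hwq) hqsum
  have hPsum : (((P.takeUntil w hwP).length : ℕ∞) + ((P.dropUntil w hwP).length : ℕ∞))
      = T.edist s r := by
    have hn : (P.takeUntil w hwP).length + (P.dropUntil w hwP).length = P.length := by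
      rw [← Walk.length_append, P.take_spec hwP]
    rw [← hlenP, ← hn]; push_cast; ring
  obtain ⟨hPt, hPd⟩ := split_edist (P.takeUntil w hwP) (P.dropUntil w hwP) hPsum
  -- the deleted edge avoids the lower segment
  have hePd : s(x, y) ∉ (P.dropUntil w hwP).edges := by
    intro hcon
    have hxPd : x ∈ (P.dropUntil w hwP).support :=
      (P.dropUntil w hwP).fst_mem_support_of_mem_edges hcon
    have hsplit2 :
        ((((P.takeUntil w hwP).append ((P.dropUntil w hwP).takeUntil x hxPd)).length : ℕ∞)
          + (((P.dropUntil w hwP).dropUntil x hxPd).length : ℕ∞)) = T.edist s r := by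
      have hn1 : ((P.dropUntil w hwP).takeUntil x hxPd).length
          + ((P.dropUntil w hwP).dropUntil x hxPd).length = (P.dropUntil w hwP).length := by
        rw [← Walk.length_append, (P.dropUntil w hwP).take_spec hxPd]
      have hn2 : (P.takeUntil w hwP).length + (P.dropUntil w hwP).length = P.length := by
        rw [← Walk.length_append, P.take_spec hwP]
      rw [← hlenP, Walk.length_append]
      push_cast
      have : ((P.takeUntil w hwP).length : ℕ∞)
          + ((P.dropUntil w hwP).takeUntil x hxPd).length
          + ((P.dropUntil w hwP).dropUntil x hxPd).length
          = ((P.takeUntil w hwP).length : ℕ∞) + (P.dropUntil w hwP).length := by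
        rw [add_assoc, ← Nat.cast_add, hn1]
      rw [this, ← Nat.cast_add, hn2]
    obtain ⟨hW1x, _⟩ := split_edist _ _ hsplit2
    have hge : T.edist s w ≤ T.edist s x := by
      rw [← hW1x, ← hPt]
      exact_mod_cast (by rw [Walk.length_append]; exact Nat.le_add_right _ _ :
        (P.takeUntil w hwP).length
          ≤ ((P.takeUntil w hwP).append ((P.dropUntil w hwP).takeUntil x hxPd)).length)
    rw [hSPT w, hSPT x] at hge
    exact absurd hwgt (not_lt.mpr hge)
  have hPdG' : ∀ e ∈ (P.dropUntil w hwP).edges, e ∈ G'.edgeSet := by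
    intro e heq
    refine hTedge_mem e ((P.dropUntil w hwP).edges_subset_edgeSet heq) ?_
    rintro rfl
    exact hePd heq
  have h_sr : G'.edist s r
      ≤ (((q.takeUntil w hwq).length + (P.dropUntil w hwP).length : ℕ) : ℕ∞) := by
    have := edist_le ((q.takeUntil w hwq).append ((P.dropUntil w hwP).transfer G' hPdG'))
    rwa [Walk.length_append, Walk.length_transfer, Nat.cast_add] at this
  have h_wt : G.edist w t ≤ ((q.dropUntil w hwq).length : ℕ∞) := by
    have := edist_le ((q.dropUntil w hwq).mapLe (G.deleteEdges_le _))
    rwa [Walk.length_map] at this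
  have hfinA : G'.edist s r ≠ ⊤ := ne_top_of_le_ne_top (ENat.coe_ne_top _) h_sr
  have ge_dir : G'.edist s r + G.edist r t ≤ G'.edist s t := by
    rw [← hqsum]
    have hGsw : ((P.takeUntil w hwP).length : ℕ∞) = G.edist s w := by rw [hPt, hSPT w]
    have hGsr : (((P.takeUntil w hwP).length + (P.dropUntil w hwP).length : ℕ) : ℕ∞)
        = G.edist s r := by push_cast; rw [hPsum, hSPT r]
    lift G'.edist s r to ℕ using hfinA with A hA
    lift G.edist r t to ℕ using hGfin r t with b hb
    lift G.edist s w to ℕ using hGfin s w with c hc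
    lift G.edist w t to ℕ using hGfin w t with d hd
    lift G.edist s r to ℕ using hGfin s r with a ha
    lift G.edist s t to ℕ using hGfin s t with st hst
    have f1 : A ≤ (q.takeUntil w hwq).length + (P.dropUntil w hwP).length := by
      exact_mod_cast h_sr
    have f2 : (P.takeUntil w hwP).length = c := by exact_mod_cast hGsw
    have f3 : (P.takeUntil w hwP).length + (P.dropUntil w hwP).length = a := by
      exact_mod_cast hGsr
    have f4 : st = a + b := by exact_mod_cast key3
    have f5 : st ≤ c + d := by
      have h := G.edist_triangle (u := s) (v := w) (w := t)
      rw [← hst, ← hc, ← hd] at h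
      exact_mod_cast h
    have f6 : d ≤ (q.dropUntil w hwq).length := by exact_mod_cast h_wt
    exact_mod_cast (by omega :
      A + b ≤ (q.takeUntil w hwq).length + (q.dropUntil w hwq).length)
  exact le_antisymm le_dir ge_dir
end

section
/- Under the shortest-path-tree separator setup, let e be an edge of the primary path P and let t ∈ V_M. If some shortest path from s to t in G∖e (i.e., an s–t path in G∖e of length d_{G∖e}(s,t)) is jumping for e and contains an edge of the induced subgraph G_N = G[V_N], then there exists a shortest path from s to t in G∖e that passes through r. -/
open SimpleGraph

private lemma tree_walk_length_eq_dist {V : Type*} {T : SimpleGraph V} (hT : T.IsTree)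
    {u v : V} (p : T.Walk u v) (hp : p.IsPath) : p.length = T.dist u v := by
  obtain ⟨p', hp', hl⟩ := hT.isConnected.exists_path_of_dist u v
  rw [(hT.existsUnique_path u v).unique hp hp', hl]

private lemma hom_walk_edges {V : Type*} {T : SimpleGraph V} {H : T.Subgraph}
    {u v : H.verts} (p : H.coe.Walk u v) :
    ∀ e ∈ (p.map H.hom).edges, e ∈ H.edgeSet := by
  induction p with
  | nil => simp
  | cons h p ih =>
    intro e he
    rw [Walk.map_cons, Walk.edges_cons] at he
    rcases List.mem_cons.mp he with rfl | he
    · exact Subgraph.mem_edgeSet.mpr h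
    · exact ih e he

private lemma hom_walk_support {V : Type*} {T : SimpleGraph V} {H : T.Subgraph}
    {u v : H.verts} (p : H.coe.Walk u v) :
    ∀ z ∈ (p.map H.hom).support, z ∈ H.verts := by
  intro z hz
  rw [Walk.support_map] at hz
  obtain ⟨z', _, rfl⟩ := List.mem_map.mp hz
  exact z'.2

private lemma dist_triangle_walk {V : Type*} {G : SimpleGraph V} (hG : G.Connected) (s : V)
    {u a : V} (W : G.Walk u a) : G.dist s a ≤ G.dist s u + W.length := by
  obtain ⟨p, hp⟩ := (hG s u).exists_walk_length_eq_dist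
  calc G.dist s a ≤ (p.append W).length := dist_le _
  _ = G.dist s u + W.length := by rw [Walk.length_append, hp]
/-- Under the shortest-path-tree separator setup, let `e = {x,y}` (with upper
endpoint `x`) be an edge of the primary path `P` and let `t ∈ V_M`.  If some shortest path from
`s` to `t` in `G∖e` is jumping for `e` and contains an edge of the induced subgraph
`G_N = G[V_N]`, then there exists a shortest path from `s` to `t` in `G∖e` passing
through `r`. -/
theorem stmt_5 {V : Type*} [Fintype V] (G : SimpleGraph V) (hG : G.Connected)
    (s r : V) (T : SimpleGraph V) (hTG : T ≤ G) (hT : T.IsTree)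
    (hSPT : ∀ v : V, T.edist s v = G.edist s v)
    (M N : T.Subgraph) (hMc : M.Connected) (hNc : N.Connected)
    (hEdisj : Disjoint M.edgeSet N.edgeSet)
    (hEunion : M.edgeSet ∪ N.edgeSet = T.edgeSet)
    (hVunion : M.verts ∪ N.verts = Set.univ)
    (hVinter : M.verts ∩ N.verts = {r})
    (hsM : s ∈ M.verts)
    (P : T.Walk s r) (hP : P.IsPath)
    (x y : V) (he : s(x, y) ∈ P.edges) (hxy : G.edist s x < G.edist s y)
    (t : V) (ht : t ∈ M.verts)
    (hjump : ∃ q : (G.deleteEdges {s(x, y)}).Walk s t, q.IsPath ∧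
        (q.length : ℕ∞) = (G.deleteEdges {s(x, y)}).edist s t ∧
        (∃ w ∈ q.support, w ∈ P.support ∧ G.edist s x < G.edist s w) ∧
        (∃ a b : V, s(a, b) ∈ q.edges ∧ a ∈ N.verts ∧ b ∈ N.verts)) :
    ∃ q' : (G.deleteEdges {s(x, y)}).Walk s t, q'.IsPath ∧
      (q'.length : ℕ∞) = (G.deleteEdges {s(x, y)}).edist s t ∧
      r ∈ q'.support := by
  classical
  set G' := G.deleteEdges {s(x, y)} with hG'def
  obtain ⟨q, hqp, hqdist, ⟨w, hwq, hwP, hwx⟩, ⟨a, b, hab, haN, hbN⟩⟩ := hjump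
  have hG'le : G' ≤ G := deleteEdges_le _
  -- basic distance facts
  have hDfin : ∀ v : V, G.edist s v ≠ ⊤ := fun v =>
    edist_ne_top_iff_reachable.mpr (hG s v)
  have hcast : ∀ v : V, ((G.dist s v : ℕ) : ℕ∞) = G.edist s v := fun v =>
    ENat.coe_toNat (hDfin v)
  have hwx' : G.dist s x < G.dist s w := by
    have h := hwx
    rw [← hcast x, ← hcast w] at h
    exact_mod_cast h
  have distTG : ∀ v : V, T.dist s v = G.dist s v := fun v => by
    unfold SimpleGraph.dist
    rw [hSPT]
  -- lengths along P
  have hlenTake : ∀ u (hu : u ∈ P.support), (P.takeUntil u hu).length = G.dist s u := by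
    intro u hu
    rw [tree_walk_length_eq_dist hT _ (hP.takeUntil hu), distTG]
  have hPlen : P.length = G.dist s r := by
    rw [tree_walk_length_eq_dist hT P hP, distTG]
  set P2 : T.Walk w r := P.dropUntil w hwP with hP2def
  have hsplitP : (P.takeUntil w hwP).append P2 = P := Walk.take_spec P hwP
  have hP2len : G.dist s w + P2.length = G.dist s r := by
    have h := congrArg Walk.length hsplitP
    rw [Walk.length_append, hlenTake w hwP, hPlen] at h
    exact h
  -- monotonicity along the suffix of P
  have hmono : ∀ u (hu : u ∈ P2.support), G.dist s w ≤ G.dist s u := by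
    intro u hu
    have h3 : ((P.takeUntil w hwP).append
        ((P2.takeUntil u hu).append (P2.dropUntil u hu))).IsPath := by
      rw [Walk.take_spec P2 hu, hsplitP]
      exact hP
    have h4 : (((P.takeUntil w hwP).append (P2.takeUntil u hu)).append
        (P2.dropUntil u hu)).IsPath := by
      rw [← Walk.append_assoc]; exact h3
    have h5 := h4.of_append_left
    have h6 := tree_walk_length_eq_dist hT _ h5
    rw [Walk.length_append, distTG u, hlenTake w hwP] at h6
    omega
  have hxP2 : x ∉ P2.support := fun hx => absurd (hmono x hx) (not_le.mpr hwx')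
  have heP2 : s(x, y) ∉ P2.edges := fun h =>
    hxP2 (P2.fst_mem_support_of_mem_edges h)
  -- r is in both vertex sets
  have hrMN : r ∈ M.verts ∩ N.verts := by
    rw [hVinter]; rfl
  -- P is the unique path in T from s to r, realized inside M
  obtain ⟨p0, hp0⟩ : ∃ p0 : M.coe.Walk ⟨s, hsM⟩ ⟨r, hrMN.1⟩, p0.IsPath := by
    obtain ⟨p⟩ := hMc ⟨s, hsM⟩ ⟨r, hrMN.1⟩
    exact ⟨p.bypass, p.bypass_isPath⟩
  have hPM : P = p0.map M.hom :=
    (hT.existsUnique_path s r).unique hP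
      (Walk.map_isPath_of_injective Subgraph.hom_injective hp0)
  have hPedges : ∀ e ∈ P.edges, e ∈ M.edgeSet := by
    rw [hPM]; exact hom_walk_edges p0
  have hPsupp : ∀ z ∈ P.support, z ∈ M.verts := by
    rw [hPM]; exact hom_walk_support p0
  -- the path R inside N from r to a
  obtain ⟨r0, hr0⟩ : ∃ p : N.coe.Walk ⟨r, hrMN.2⟩ ⟨a, haN⟩, p.IsPath := by
    obtain ⟨p⟩ := hNc ⟨r, hrMN.2⟩ ⟨a, haN⟩
    exact ⟨p.bypass, p.bypass_isPath⟩
  set R : T.Walk r a := r0.map N.hom with hRdef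
  have hRp : R.IsPath := Walk.map_isPath_of_injective Subgraph.hom_injective hr0
  have hRedges : ∀ e ∈ R.edges, e ∈ N.edgeSet := hom_walk_edges r0
  have hRsupp : ∀ z ∈ R.support, z ∈ N.verts := hom_walk_support r0
  have heR : s(x, y) ∉ R.edges := fun h =>
    Set.disjoint_left.mp hEdisj (hPedges _ he) (hRedges _ h)
  -- P ++ R is a path, giving dist s a = dist s r + R.length
  have hrtail : r ∉ R.support.tail := by
    have hnd := hRp.support_nodup
    rw [R.support_eq_cons] at hnd
    exact (List.nodup_cons.mp hnd).1
  have hQp : (P.append R).IsPath := by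
    rw [Walk.isPath_def, Walk.support_append]
    refine List.Nodup.append hP.support_nodup hRp.support_nodup.tail ?_
    intro z hz1 hz2
    have hzM := hPsupp z hz1
    have hzN := hRsupp z (List.mem_of_mem_tail hz2)
    have hz : z ∈ M.verts ∩ N.verts := ⟨hzM, hzN⟩
    rw [hVinter] at hz
    exact hrtail (hz ▸ hz2)
  have hQlen : G.dist s a = G.dist s r + R.length := by
    have h := tree_walk_length_eq_dist hT _ hQp
    rw [Walk.length_append, distTG a, hPlen] at h
    omega
  -- transfer T-walks avoiding e into G'
  have hTedge : ∀ {c d : V} (p : T.Walk c d), s(x, y) ∉ p.edges →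
      ∀ e ∈ p.edges, e ∈ G'.edgeSet := by
    intro c d p hne e hep
    rw [hG'def, edgeSet_deleteEdges]
    refine ⟨edgeSet_mono hTG (p.edges_subset_edgeSet hep), ?_⟩
    simp only [Set.mem_singleton_iff]
    rintro rfl
    exact hne hep
  -- key triangle bound
  have htri : ∀ (W : G'.Walk w a), P2.length + R.length ≤ W.length := by
    intro W
    have h1 := dist_triangle_walk hG s (W.mapLe hG'le)
    rw [Walk.length_map] at h1
    omega
  -- locate a relative to w on q
  have haq : a ∈ q.support := q.fst_mem_support_of_mem_edges hab
  have hacases : a ∈ (q.takeUntil w hwq).support ∨ a ∈ (q.dropUntil w hwq).support := by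
    rw [← Walk.mem_support_append_iff, Walk.take_spec q hwq]
    exact haq
  -- reduce to finding a short enough walk through r
  suffices hW : ∃ W : G'.Walk s t, W.length ≤ q.length ∧ r ∈ W.support by
    obtain ⟨W, hWlen, hWr⟩ := hW
    have hedist : (W.length : ℕ∞) = G'.edist s t :=
      le_antisymm (le_trans (by exact_mod_cast hWlen) (le_of_eq hqdist)) (edist_le W)
    set q' : G'.Walk s t :=
      (W.takeUntil r hWr).bypass.append (W.dropUntil r hWr).bypass with hq'def
    have hq'len : q'.length ≤ W.length := by
      have e0 := congrArg Walk.length (W.take_spec hWr)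
      rw [Walk.length_append] at e0
      have b1 := (W.takeUntil r hWr).length_bypass_le
      have b2 := (W.dropUntil r hWr).length_bypass_le
      rw [hq'def, Walk.length_append]
      omega
    have hq'edist : (q'.length : ℕ∞) = G'.edist s t :=
      le_antisymm (le_trans (by exact_mod_cast hq'len) (le_of_eq hedist)) (edist_le q')
    have hq'path : q'.IsPath := by
      refine q'.isPath_of_length_eq_dist ?_
      have : G'.dist s t = ((q'.length : ℕ∞)).toNat := by
        unfold SimpleGraph.dist
        rw [hq'edist]
      rw [this, ENat.toNat_coe]
    refine ⟨q', hq'path, hq'edist, ?_⟩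
    rw [hq'def, Walk.mem_support_append_iff]
    left
    exact Walk.end_mem_support _
  -- construct the walk through r in the two cases
  rcases hacases with ha1 | ha2
  · -- a occurs before w on q
    refine ⟨((q.takeUntil w hwq).takeUntil a ha1).append
      (((R.transfer G' (hTedge R heR)).reverse).append
        (((P2.transfer G' (hTedge P2 heP2)).reverse).append (q.dropUntil w hwq))), ?_, ?_⟩
    · have e1 : (q.takeUntil w hwq).length + (q.dropUntil w hwq).length = q.length := by
        have h := congrArg Walk.length (q.take_spec hwq)
        rwa [Walk.length_append] at h
      have e2 : ((q.takeUntil w hwq).takeUntil a ha1).length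
          + ((q.takeUntil w hwq).dropUntil a ha1).length = (q.takeUntil w hwq).length := by
        have h := congrArg Walk.length ((q.takeUntil w hwq).take_spec ha1)
        rwa [Walk.length_append] at h
      have e3 := htri ((q.takeUntil w hwq).dropUntil a ha1).reverse
      rw [Walk.length_reverse] at e3
      simp only [Walk.length_append, Walk.length_reverse, Walk.length_transfer]
      omega
    · rw [Walk.mem_support_append_iff]
      right
      rw [Walk.mem_support_append_iff]
      left
      exact Walk.end_mem_support _
  · -- a occurs after w on q
    refine ⟨(q.takeUntil w hwq).append
      ((P2.transfer G' (hTedge P2 heP2)).append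
        ((R.transfer G' (hTedge R heR)).append ((q.dropUntil w hwq).dropUntil a ha2))), ?_, ?_⟩
    · have e1 : (q.takeUntil w hwq).length + (q.dropUntil w hwq).length = q.length := by
        have h := congrArg Walk.length (q.take_spec hwq)
        rwa [Walk.length_append] at h
      have e2 : ((q.dropUntil w hwq).takeUntil a ha2).length
          + ((q.dropUntil w hwq).dropUntil a ha2).length = (q.dropUntil w hwq).length := by
        have h := congrArg Walk.length ((q.dropUntil w hwq).take_spec ha2)
        rwa [Walk.length_append] at h
      have e3 := htri ((q.dropUntil w hwq).takeUntil a ha2)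
      simp only [Walk.length_append, Walk.length_transfer]
      omega
    · rw [Walk.mem_support_append_iff]
      right
      rw [Walk.mem_support_append_iff]
      left
      exact Walk.end_mem_support _
end

section
/- Under the shortest-path-tree separator setup, let e be an edge of the induced subgraph G_M = G[V_M] that is not an edge of the primary path P, and let t ∈ V_N. Then d_{G∖e}(s,t) = d_G(s,t). -/
open SimpleGraph

private lemma aux_cross {V : Type*} {T : SimpleGraph V} (M N : T.Subgraph) (r : V)
    (hEunion : M.edgeSet ∪ N.edgeSet = T.edgeSet)
    (hVinter : M.verts ∩ N.verts = {r}) :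
    ∀ {a b : V} (w : T.Walk a b), a ∈ M.verts → b ∈ N.verts → r ∈ w.support := by
  intro a b w
  induction w with
  | nil =>
    intro ha hb
    have h1 : _ ∈ M.verts ∩ N.verts := ⟨ha, hb⟩
    rw [hVinter] at h1
    have := Set.mem_singleton_iff.mp h1
    subst this
    exact SimpleGraph.Walk.start_mem_support _
  | @cons a c _ hac p ih =>
    intro ha hb
    have he : Sym2.mk a c ∈ M.edgeSet ∪ N.edgeSet := by
      rw [hEunion]; exact hac
    rcases he with he | he
    · have hc : c ∈ M.verts := M.edge_vert (Subgraph.mem_edgeSet.mp he).symm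
      rw [SimpleGraph.Walk.support_cons]; exact List.mem_cons_of_mem _ (ih hc hb)
    · have haN : a ∈ N.verts := N.edge_vert (Subgraph.mem_edgeSet.mp he)
      have h1 : a ∈ M.verts ∩ N.verts := ⟨ha, haN⟩
      rw [hVinter] at h1
      have := Set.mem_singleton_iff.mp h1
      subst this
      exact SimpleGraph.Walk.start_mem_support _

private lemma aux_edges_N {V : Type*} {T : SimpleGraph V} (N : T.Subgraph) :
    ∀ {a b : N.verts} (w : N.coe.Walk a b), ∀ e ∈ (w.map N.hom).edges, e ∈ N.edgeSet := by
  intro a b w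
  induction w with
  | nil => simp
  | @cons a c _ hac p ih =>
    intro e he
    rw [SimpleGraph.Walk.map_cons, SimpleGraph.Walk.edges_cons] at he
    rcases List.mem_cons.mp he with h | h
    · subst h
      exact Subgraph.mem_edgeSet.mpr ((Subgraph.coe_adj N a c) ▸ hac)
    · exact ih e h

/-- Under the shortest-path-tree separator setup, let `e = {x,y}` be an edge
of the induced subgraph `G_M = G[V_M]` that is not an edge of the primary path `P`, and let
`t ∈ V_N`.  Then `d_{G∖e}(s,t) = d_G(s,t)`. -/
theorem stmt_6 {V : Type*} [Fintype V] (G : SimpleGraph V) (hG : G.Connected)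
    (s r : V) (T : SimpleGraph V) (hTG : T ≤ G) (hT : T.IsTree)
    (hSPT : ∀ v : V, T.edist s v = G.edist s v)
    (M N : T.Subgraph) (hMc : M.Connected) (hNc : N.Connected)
    (hEdisj : Disjoint M.edgeSet N.edgeSet)
    (hEunion : M.edgeSet ∪ N.edgeSet = T.edgeSet)
    (hVunion : M.verts ∪ N.verts = Set.univ)
    (hVinter : M.verts ∩ N.verts = {r})
    (hsM : s ∈ M.verts)
    (P : T.Walk s r) (hP : P.IsPath)
    (x y : V) (hxyAdj : G.Adj x y) (hxM : x ∈ M.verts) (hyM : y ∈ M.verts)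
    (heP : Sym2.mk x y ∉ P.edges)
    (t : V) (ht : t ∈ N.verts) :
    (G.deleteEdges {Sym2.mk x y}).edist s t = G.edist s t := by
  classical
  set e : Sym2 V := Sym2.mk x y with he_def
  have hTc : T.Connected := hT.isConnected
  have hrN : r ∈ N.verts := by
    have : r ∈ M.verts ∩ N.verts := by rw [hVinter]; rfl
    exact this.2
  -- e is not an N-edge
  have heN : e ∉ N.edgeSet := by
    intro h
    have hxN : x ∈ N.verts := N.edge_vert (Subgraph.mem_edgeSet.mp h)
    have hyN : y ∈ N.verts := N.edge_vert (Subgraph.mem_edgeSet.mp h).symm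
    have hx : x ∈ ({r} : Set V) := hVinter ▸ ⟨hxM, hxN⟩
    have hy : y ∈ ({r} : Set V) := hVinter ▸ ⟨hyM, hyN⟩
    exact hxyAdj.ne (hx.trans hy.symm)
  -- P has length T.dist s r
  have hPlen : P.length = T.dist s r := by
    obtain ⟨D, hD, hDlen⟩ := hTc.exists_path_of_dist s r
    have := hT.IsAcyclic.path_unique ⟨P, hP⟩ ⟨D, hD⟩
    rw [show P = D from congrArg Subtype.val this]
    exact hDlen
  -- a path Q from r to t with edges in N and length = T.dist r t
  obtain ⟨wN⟩ := hNc.coe ⟨r, hrN⟩ ⟨t, ht⟩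
  set Q0 : T.Walk r t := wN.map N.hom with hQ0
  set Q : T.Walk r t := (Q0.toPath : T.Walk r t) with hQdef
  have hQedges : ∀ f ∈ Q.edges, f ∈ N.edgeSet := fun f hf =>
    aux_edges_N N wN f (SimpleGraph.Walk.edges_toPath_subset Q0 hf)
  have hQlen : Q.length = T.dist r t := by
    obtain ⟨D, hD, hDlen⟩ := hTc.exists_path_of_dist r t
    have := hT.IsAcyclic.path_unique Q0.toPath ⟨D, hD⟩
    rw [hQdef, show (Q0.toPath : T.Walk r t) = D from congrArg Subtype.val this]
    exact hDlen
  -- r lies on every s-t walk in T, hence dist additivity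
  obtain ⟨W0, hW0len⟩ := (hTc s t).exists_walk_length_eq_dist
  have hrW0 : r ∈ W0.support := aux_cross M N r hEunion hVinter W0 hsM ht
  have hadd : T.dist s r + T.dist r t ≤ T.dist s t := by
    have hsplit := W0.take_spec hrW0
    have hlen : (W0.takeUntil r hrW0).length + (W0.dropUntil r hrW0).length = W0.length := by
      rw [← SimpleGraph.Walk.length_append, hsplit]
    calc T.dist s r + T.dist r t
        ≤ (W0.takeUntil r hrW0).length + (W0.dropUntil r hrW0).length :=
          Nat.add_le_add (SimpleGraph.dist_le _) (SimpleGraph.dist_le _)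
      _ = W0.length := hlen
      _ = T.dist s t := hW0len
  -- the combined walk
  set W : T.Walk s t := P.append Q with hWdef
  have hWlen : W.length = T.dist s t := by
    have h1 : T.dist s t ≤ W.length := SimpleGraph.dist_le W
    have h2 : W.length ≤ T.dist s t := by
      rw [hWdef, SimpleGraph.Walk.length_append, hPlen, hQlen]
      exact hadd
    omega
  have heW : e ∉ W.edges := by
    intro hw
    rw [hWdef, SimpleGraph.Walk.edges_append, List.mem_append] at hw
    rcases hw with hw | hw
    · exact heP hw
    · exact heN (hQedges e hw)
  -- transfer to G \ e
  have hWin : ∀ f ∈ W.edges, f ∈ (G.deleteEdges {e}).edgeSet := by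
    intro f hf
    rw [SimpleGraph.edgeSet_deleteEdges]
    refine ⟨SimpleGraph.edgeSet_mono hTG (W.edges_subset_edgeSet hf), ?_⟩
    simp only [Set.mem_singleton_iff]
    intro h; exact heW (h ▸ hf)
  set W' := W.transfer (G.deleteEdges {e}) hWin with hW'
  have hle : (G.deleteEdges {e}).edist s t ≤ G.edist s t := by
    calc (G.deleteEdges {e}).edist s t ≤ W'.length := SimpleGraph.edist_le W'
      _ = (W.length : ℕ∞) := by rw [hW', SimpleGraph.Walk.length_transfer]
      _ = ((T.dist s t : ℕ) : ℕ∞) := by rw [hWlen]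
      _ = T.edist s t := by
          rw [SimpleGraph.dist]
          exact ENat.coe_toNat (SimpleGraph.edist_ne_top_iff_reachable.mpr (hTc s t))
      _ = G.edist s t := hSPT t
  have hge : G.edist s t ≤ (G.deleteEdges {e}).edist s t :=
    SimpleGraph.edist_anti (SimpleGraph.deleteEdges_le _)
  exact le_antisymm hle hge
end

section
/- Under the shortest-path-tree separator setup, let e be an edge of the induced subgraph G_M = G[V_M] that is not an edge of the primary path P, and let t ∈ V_M. If some shortest path from s to t in G∖e (i.e., an s–t path in G∖e of length d_{G∖e}(s,t)) contains an edge of G_N = G[V_N], then d_{G∖e}(s,t) = min over v ∈ V_M of ( d_G(s,r) + d_{G−E(G_M)}(r,v) + d_{G_M∖e}(v,t) ), where the minimum and all distances are taken in ℕ ∪ {∞}. -/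
open SimpleGraph

/-- The subgraph of `G` induced on the vertex set `U`, kept as a graph on the same vertex
type: vertices outside `U` become isolated, so distances between vertices of `U` agree with
those in `G[U]`. -/
def inducedOn {V : Type*} (G : SimpleGraph V) (U : Set V) : SimpleGraph V where
  Adj a b := G.Adj a b ∧ a ∈ U ∧ b ∈ U
  symm := ⟨fun a b h => ⟨h.1.symm, h.2.2, h.2.1⟩⟩
  loopless := ⟨fun a h => G.loopless.irrefl a h.1⟩

lemma inducedOn_adj {V : Type*} {G : SimpleGraph V} {U : Set V} {a b : V} :
    (inducedOn G U).Adj a b ↔ G.Adj a b ∧ a ∈ U ∧ b ∈ U := Iff.rfl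

/-- In a tree, any path between two vertices has length equal to the extended distance. -/
lemma tree_path_length_eq_edist' {V : Type*} {T : SimpleGraph V} (hT : T.IsTree)
    {a b : V} {p : T.Walk a b} (hp : p.IsPath) : (p.length : ℕ∞) = T.edist a b := by
  classical
  refine le_antisymm ?_ (T.edist_le p)
  obtain ⟨q, hq⟩ := (hT.isConnected a b).exists_walk_length_eq_edist
  have huniq : (⟨p, hp⟩ : T.Path a b) = q.toPath := hT.IsAcyclic.path_unique _ _
  have hlen : p.length = (q.toPath : T.Walk a b).length :=
    congrArg (fun P : T.Path a b => (P : T.Walk a b).length) huniq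
  rw [← hq]
  exact_mod_cast hlen ▸ (Nat.cast_le.mpr (Walk.length_bypass_le q))

/-- A connected subgraph yields walks between its vertices whose edges lie in the subgraph. -/
lemma exists_walk_in_subgraph' {V : Type*} {G : SimpleGraph V} {H : G.Subgraph}
    (hH : H.Connected) {a b : V} (ha : a ∈ H.verts) (hb : b ∈ H.verts) :
    ∃ p : G.Walk a b, ∀ e ∈ p.edges, e ∈ H.edgeSet := by
  have key : ∀ (u v : H.verts) (w : H.coe.Walk u v),
      ∃ p : G.Walk u.val v.val, ∀ e ∈ p.edges, e ∈ H.edgeSet := by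
    intro u v w
    induction w with
    | nil => exact ⟨Walk.nil, by simp⟩
    | @cons u z v h w ih =>
      obtain ⟨p, hp⟩ := ih
      have hAdj : H.Adj u.val z.val := h
      refine ⟨Walk.cons hAdj.adj_sub p, ?_⟩
      intro e he
      rw [Walk.edges_cons] at he
      rcases List.mem_cons.mp he with rfl | he'
      · exact Subgraph.mem_edgeSet.mpr hAdj
      · exact hp e he'
  obtain ⟨w⟩ := hH.coe.preconnected ⟨a, ha⟩ ⟨b, hb⟩
  exact key _ _ w

/-- Under the shortest-path-tree separator setup, let `e = {x,y}` be an edge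
of `G_M = G[V_M]` not on the primary path `P`, and let `t ∈ V_M`.  If some shortest path from
`s` to `t` in `G∖e` contains an edge of `G_N = G[V_N]`, then
`d_{G∖e}(s,t) = min_{v ∈ V_M} ( d_G(s,r) + d_{G−E(G_M)}(r,v) + d_{G_M∖e}(v,t) )`. -/
theorem stmt_7 {V : Type*} [Fintype V] (G : SimpleGraph V) (hG : G.Connected)
    (s r : V) (T : SimpleGraph V) (hTG : T ≤ G) (hT : T.IsTree)
    (hSPT : ∀ v : V, T.edist s v = G.edist s v)
    (M N : T.Subgraph) (hMc : M.Connected) (hNc : N.Connected)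
    (hEdisj : Disjoint M.edgeSet N.edgeSet)
    (hEunion : M.edgeSet ∪ N.edgeSet = T.edgeSet)
    (hVunion : M.verts ∪ N.verts = Set.univ)
    (hVinter : M.verts ∩ N.verts = {r})
    (hsM : s ∈ M.verts)
    (P : T.Walk s r) (hP : P.IsPath)
    (x y : V) (hxyAdj : G.Adj x y) (hxM : x ∈ M.verts) (hyM : y ∈ M.verts)
    (heP : s(x, y) ∉ P.edges)
    (t : V) (ht : t ∈ M.verts)
    (huse : ∃ q : (G.deleteEdges {s(x, y)}).Walk s t, q.IsPath ∧
        (q.length : ℕ∞) = (G.deleteEdges {s(x, y)}).edist s t ∧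
        ∃ a b : V, s(a, b) ∈ q.edges ∧ a ∈ N.verts ∧ b ∈ N.verts) :
    (G.deleteEdges {s(x, y)}).edist s t
      = ⨅ v ∈ M.verts,
          (G.edist s r
            + (G.deleteEdges {e : Sym2 V | ∀ z ∈ e, z ∈ M.verts}).edist r v
            + ((inducedOn G M.verts).deleteEdges {s(x, y)}).edist v t) := by
  classical
  set D := G.deleteEdges {s(x, y)} with hD
  set Grm := G.deleteEdges {e : Sym2 V | ∀ z ∈ e, z ∈ M.verts} with hGrm
  set GMe := (inducedOn G M.verts).deleteEdges {s(x, y)} with hGMe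
  -- basic membership facts
  have hrMN : r ∈ M.verts ∩ N.verts := by rw [hVinter]; rfl
  have hrM : r ∈ M.verts := hrMN.1
  have hrN : r ∈ N.verts := hrMN.2
  have hMN : ∀ {z : V}, z ∈ M.verts → z ∈ N.verts → z = r := by
    intro z h1 h2
    have : z ∈ M.verts ∩ N.verts := ⟨h1, h2⟩
    rwa [hVinter, Set.mem_singleton_iff] at this
  have hnotM : ∀ {z : V}, z ∉ M.verts → z ∈ N.verts := by
    intro z hz
    have h1 : z ∈ M.verts ∪ N.verts := by rw [hVunion]; trivial
    exact ((Set.mem_union z _ _).mp h1).resolve_left hz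
  -- Lemma D : any T-walk from M to outside M passes through r
  have lemD : ∀ (u w : V) (p : T.Walk u w), u ∈ M.verts → w ∉ M.verts → r ∈ p.support := by
    intro u w p
    induction p with
    | nil => intro hu hw; exact absurd hu hw
    | @cons u u' w h p ih =>
      intro hu hw
      rw [Walk.support_cons]
      by_cases hu' : u' ∈ M.verts
      · exact List.mem_cons_of_mem _ (ih hu' hw)
      · have hedge : s(u, u') ∈ T.edgeSet := T.mem_edgeSet.mpr h
        rw [← hEunion] at hedge
        rcases hedge with hMe | hNe
        · exact absurd (Subgraph.mem_edgeSet.mp hMe).snd_mem hu'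
        · have hur : u = r := hMN hu (Subgraph.mem_edgeSet.mp hNe).fst_mem
          rw [← hur]
          exact List.mem_cons_self
  -- Lemma E : additivity of tree distance through r
  have lemE : ∀ w : V, w ∉ M.verts → T.edist s w = T.edist s r + T.edist r w := by
    intro w hw
    refine le_antisymm T.edist_triangle ?_
    obtain ⟨p, hp⟩ := (hT.isConnected s w).exists_walk_length_eq_edist
    have hr' : r ∈ p.support := lemD s w p hsM hw
    have hlen : (p.takeUntil r hr').length + (p.dropUntil r hr').length = p.length := by
      rw [← Walk.length_append, p.take_spec hr']
    calc T.edist s r + T.edist r w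
        ≤ ((p.takeUntil r hr').length : ℕ∞) + ((p.dropUntil r hr').length : ℕ∞) :=
          add_le_add (T.edist_le _) (T.edist_le _)
      _ = (p.length : ℕ∞) := by rw [← hlen]; push_cast; ring
      _ = T.edist s w := hp
  -- bound : Grm-distance from r to vertices of N is at most tree distance
  have hGrmT : ∀ w : V, w ∈ N.verts → Grm.edist r w ≤ T.edist r w := by
    intro w hwN
    obtain ⟨q0, hq0⟩ := exists_walk_in_subgraph' hNc hrN hwN
    have hp0path : q0.bypass.IsPath := q0.bypass_isPath
    have hp0edges : ∀ e' ∈ q0.bypass.edges, e' ∈ N.edgeSet :=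
      fun e' he' => hq0 e' (q0.edges_bypass_subset he')
    have htrans : ∀ e' ∈ q0.bypass.edges, e' ∈ Grm.edgeSet := by
      intro e' he'
      have hN := hp0edges e' he'
      induction e' using Sym2.ind with
      | _ a b =>
        rw [Subgraph.mem_edgeSet] at hN
        rw [mem_edgeSet, hGrm, deleteEdges_adj]
        refine ⟨hTG hN.adj_sub, ?_⟩
        intro hall
        have ha : a = r := hMN (hall a (Sym2.mem_mk_left a b)) hN.fst_mem
        have hb : b = r := hMN (hall b (Sym2.mem_mk_right a b)) hN.snd_mem
        exact hN.adj_sub.ne (by rw [ha, hb])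
    calc Grm.edist r w ≤ ((q0.bypass.transfer Grm htrans).length : ℕ∞) := Grm.edist_le _
      _ = (q0.bypass.length : ℕ∞) := by rw [Walk.length_transfer]
      _ = T.edist r w := tree_path_length_eq_edist' hT hp0path
  -- graph comparisons
  have hGrm_le_D : Grm ≤ D := by
    intro a b hab
    rw [hGrm, deleteEdges_adj] at hab
    rw [hD, deleteEdges_adj]
    refine ⟨hab.1, ?_⟩
    intro hmem
    rw [Set.mem_singleton_iff] at hmem
    apply hab.2
    rw [hmem]
    intro z hz
    rcases Sym2.mem_iff.mp hz with rfl | rfl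
    · exact hxM
    · exact hyM
  have hGMe_le_D : GMe ≤ D := by
    intro a b hab
    rw [hGMe, deleteEdges_adj, inducedOn_adj] at hab
    rw [hD, deleteEdges_adj]
    exact ⟨hab.1.1, hab.2⟩
  -- key B : D-walks with support in M give GMe-distance bounds
  have keyB : ∀ (a c : V) (p : D.Walk a c), (∀ z ∈ p.support, z ∈ M.verts) →
      GMe.edist a c ≤ (p.length : ℕ∞) := by
    intro a c p
    induction p with
    | nil => intro _; simp [SimpleGraph.edist_self]
    | @cons a a' c h p ih =>
      intro hsup
      have ha : a ∈ M.verts := hsup a (Walk.start_mem_support _)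
      have hsup' : ∀ z ∈ p.support, z ∈ M.verts := by
        intro z hz; exact hsup z (by rw [Walk.support_cons]; exact List.mem_cons_of_mem _ hz)
      have ha' : a' ∈ M.verts := hsup' a' (Walk.start_mem_support _)
      have hadj : GMe.Adj a a' := by
        rw [hD, deleteEdges_adj] at h
        rw [hGMe, deleteEdges_adj, inducedOn_adj]
        exact ⟨⟨h.1, ha, ha'⟩, h.2⟩
      calc GMe.edist a c ≤ GMe.edist a a' + GMe.edist a' c := GMe.edist_triangle
        _ ≤ 1 + (p.length : ℕ∞) := by
            refine add_le_add ?_ (ih hsup')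
            calc GMe.edist a a' ≤ (hadj.toWalk.length : ℕ∞) := GMe.edist_le _
              _ = 1 := by simp
        _ = ((Walk.cons h p).length : ℕ∞) := by rw [Walk.length_cons]; push_cast; ring
  -- key A : main decomposition of a D-walk that leaves M
  have keyA : ∀ (u c : V) (q : D.Walk u c), c ∈ M.verts → (∃ z ∈ q.support, z ∉ M.verts) →
      ∃ w v : V, w ∉ M.verts ∧ v ∈ M.verts ∧ D.Adj w v ∧
        D.edist u w + 1 + GMe.edist v c ≤ (q.length : ℕ∞) := by
    intro u c q
    induction q with
    | nil =>
      rintro hc ⟨z, hz, hzM⟩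
      rw [Walk.support_nil, List.mem_singleton] at hz
      exact absurd (hz ▸ hc) hzM
    | @cons u u' c h p ih =>
      rintro hc ⟨z, hz, hzM⟩
      by_cases hex : ∃ z' ∈ p.support, z' ∉ M.verts
      · obtain ⟨w', v', hw', hv', hadj, hb⟩ := ih hc hex
        refine ⟨w', v', hw', hv', hadj, ?_⟩
        have h1 : D.edist u w' ≤ 1 + D.edist u' w' := by
          calc D.edist u w' ≤ D.edist u u' + D.edist u' w' := D.edist_triangle
            _ ≤ 1 + D.edist u' w' := by
                refine add_le_add ?_ le_rfl
                calc D.edist u u' ≤ (h.toWalk.length : ℕ∞) := D.edist_le _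
                  _ = 1 := by simp
        calc D.edist u w' + 1 + GMe.edist v' c
            ≤ (1 + D.edist u' w') + 1 + GMe.edist v' c := by
              exact add_le_add (add_le_add h1 le_rfl) le_rfl
          _ = 1 + (D.edist u' w' + 1 + GMe.edist v' c) := by ring
          _ ≤ 1 + (p.length : ℕ∞) := add_le_add le_rfl hb
          _ = ((Walk.cons h p).length : ℕ∞) := by rw [Walk.length_cons]; push_cast; ring
      · push_neg at hex
        have huM : u ∉ M.verts := by
          rw [Walk.support_cons] at hz
          rcases List.mem_cons.mp hz with rfl | hz'
          · exact hzM
          · exact absurd (hex z hz') hzM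
        refine ⟨u, u', huM, hex u' (Walk.start_mem_support p), h, ?_⟩
        rw [SimpleGraph.edist_self, zero_add]
        calc 1 + GMe.edist u' c ≤ 1 + (p.length : ℕ∞) := add_le_add le_rfl (keyB u' c p hex)
          _ = ((Walk.cons h p).length : ℕ∞) := by rw [Walk.length_cons]; push_cast; ring
  -- now the main equality
  refine le_antisymm ?_ ?_
  · -- ≤ : upper bound for every v
    refine le_iInf fun v => le_iInf fun hv => ?_
    have hPD : ∀ e' ∈ P.edges, e' ∈ D.edgeSet := by
      intro e' he'
      rw [hD, edgeSet_deleteEdges]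
      refine ⟨edgeSet_subset_edgeSet.mpr hTG (P.edges_subset_edgeSet he'), ?_⟩
      intro hcon
      rw [Set.mem_singleton_iff] at hcon
      exact heP (hcon ▸ he')
    have hsr : D.edist s r ≤ G.edist s r := by
      calc D.edist s r ≤ ((P.transfer D hPD).length : ℕ∞) := D.edist_le _
        _ = (P.length : ℕ∞) := by rw [Walk.length_transfer]
        _ = T.edist s r := tree_path_length_eq_edist' hT hP
        _ = G.edist s r := hSPT r
    calc D.edist s t ≤ D.edist s v + D.edist v t := D.edist_triangle
      _ ≤ (D.edist s r + D.edist r v) + D.edist v t := add_le_add D.edist_triangle le_rfl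
      _ ≤ G.edist s r + Grm.edist r v + GMe.edist v t :=
          add_le_add (add_le_add hsr (edist_anti hGrm_le_D)) (edist_anti hGMe_le_D)
  · -- ≥ : lower bound from the given shortest path
    obtain ⟨q, hqp, hql, a, b, hab, haN, hbN⟩ := huse
    have hqadj : D.Adj a b := q.adj_of_mem_edges hab
    have hzq : ∃ z ∈ q.support, z ∉ M.verts := by
      by_cases haM : a ∈ M.verts
      · refine ⟨b, q.snd_mem_support_of_mem_edges hab, fun hbM => ?_⟩
        have hGab : G.Adj a b := (deleteEdges_le _ ) hqadj
        exact hGab.ne (by rw [hMN haM haN, hMN hbM hbN])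
      · exact ⟨a, q.fst_mem_support_of_mem_edges hab, haM⟩
    obtain ⟨w, v, hwM, hvM, hadj, hbound⟩ := keyA s t q ht hzq
    have hwN : w ∈ N.verts := hnotM hwM
    have hGwv : G.Adj w v := (deleteEdges_le _) hadj
    have hGrmwv : Grm.Adj w v := by
      rw [hGrm, deleteEdges_adj]
      exact ⟨hGwv, fun hall => hwM (hall w (Sym2.mem_mk_left w v))⟩
    have h2 : Grm.edist r v ≤ T.edist r w + 1 := by
      calc Grm.edist r v ≤ Grm.edist r w + Grm.edist w v := Grm.edist_triangle
        _ ≤ T.edist r w + 1 := by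
            refine add_le_add (hGrmT w hwN) ?_
            calc Grm.edist w v ≤ (hGrmwv.toWalk.length : ℕ∞) := Grm.edist_le _
              _ = 1 := by simp
    have h3 : G.edist s r + T.edist r w ≤ D.edist s w := by
      calc G.edist s r + T.edist r w = T.edist s r + T.edist r w := by rw [hSPT r]
        _ = T.edist s w := (lemE w hwM).symm
        _ = G.edist s w := hSPT w
        _ ≤ D.edist s w := edist_anti (deleteEdges_le _)
    have hfv : G.edist s r + Grm.edist r v + GMe.edist v t ≤ D.edist s t := by
      calc G.edist s r + Grm.edist r v + GMe.edist v t
          ≤ G.edist s r + (T.edist r w + 1) + GMe.edist v t := by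
            exact add_le_add (add_le_add le_rfl h2) le_rfl
        _ = (G.edist s r + T.edist r w) + 1 + GMe.edist v t := by ring
        _ ≤ D.edist s w + 1 + GMe.edist v t := by
            exact add_le_add (add_le_add h3 le_rfl) le_rfl
        _ ≤ (q.length : ℕ∞) := hbound
        _ = D.edist s t := hql
    calc (⨅ v ∈ M.verts, (G.edist s r + Grm.edist r v + GMe.edist v t))
        ≤ G.edist s r + Grm.edist r v + GMe.edist v t := iInf₂_le v hvM
      _ ≤ D.edist s t := hfv
end

section
/- Under the shortest-path-tree separator setup, let e be an edge of the induced subgraph G_N = G[V_N] and let t ∈ V_N. Then d_{G∖e}(s,t) = min over v ∈ V_N of ( d_{G−E(G_N)}(s,v) + d_{G_N∖e}(v,t) ), where the minimum and all distances are taken in ℕ ∪ {∞}. -/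
open SimpleGraph

lemma tree_walk_in_subgraph {V : Type*} {T : SimpleGraph V} (hT : T.IsTree) {M : T.Subgraph}
    (hMc : M.Connected) {s w : V} (hs : s ∈ M.verts) (hw : w ∈ M.verts) :
    ∃ p : T.Walk s w, (∀ e ∈ p.edges, e ∈ M.edgeSet) ∧ (p.length : ℕ∞) = T.edist s w := by
  classical
  obtain ⟨q₀⟩ := hMc ⟨s, hs⟩ ⟨w, hw⟩
  set q : T.Walk s w := q₀.map M.hom with hq
  have hqe : ∀ e ∈ q.edges, e ∈ M.edgeSet := by
    intro e he
    replace he : e ∈ (q₀.map M.hom).edges := he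
    rw [SimpleGraph.Walk.edges_map] at he
    obtain ⟨e', he', rfl⟩ := List.mem_map.mp he
    have hmem := q₀.edges_subset_edgeSet he'
    revert hmem
    refine Sym2.ind (fun a b hmem => ?_) e'
    rw [SimpleGraph.mem_edgeSet, SimpleGraph.Subgraph.coe_adj] at hmem
    rw [Sym2.map_pair_eq]
    exact hmem
  refine ⟨q.bypass, fun e he => hqe e (q.edges_bypass_subset he), ?_⟩
  obtain ⟨p', hp'⟩ := (hT.isConnected s w).exists_walk_length_eq_edist
  have huniq : (⟨q.bypass, q.bypass_isPath⟩ : T.Path s w) = ⟨p'.bypass, p'.bypass_isPath⟩ :=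
    hT.IsAcyclic.path_unique _ _
  have hlen : q.bypass.length = p'.bypass.length := by
    have := congrArg Subtype.val huniq; simpa using congrArg SimpleGraph.Walk.length this
  refine le_antisymm ?_ (hp' ▸ SimpleGraph.edist_le q.bypass)
  calc (q.bypass.length : ℕ∞) = p'.bypass.length := by exact_mod_cast hlen
    _ ≤ p'.length := by exact_mod_cast p'.length_bypass_le
    _ = T.edist s w := hp'

/-- Under the shortest-path-tree separator setup, let `e = {x,y}` be an edge
of `G_N = G[V_N]` and let `t ∈ V_N`.  Then
`d_{G∖e}(s,t) = min_{v ∈ V_N} ( d_{G−E(G_N)}(s,v) + d_{G_N∖e}(v,t) )`. -/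
theorem stmt_8 {V : Type*} [Fintype V] (G : SimpleGraph V) (hG : G.Connected)
    (s r : V) (T : SimpleGraph V) (hTG : T ≤ G) (hT : T.IsTree)
    (hSPT : ∀ v : V, T.edist s v = G.edist s v)
    (M N : T.Subgraph) (hMc : M.Connected) (hNc : N.Connected)
    (hEdisj : Disjoint M.edgeSet N.edgeSet)
    (hEunion : M.edgeSet ∪ N.edgeSet = T.edgeSet)
    (hVunion : M.verts ∪ N.verts = Set.univ)
    (hVinter : M.verts ∩ N.verts = {r})
    (hsM : s ∈ M.verts)
    (x y : V) (hxyAdj : G.Adj x y) (hxN : x ∈ N.verts) (hyN : y ∈ N.verts)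
    (t : V) (ht : t ∈ N.verts) :
    (G.deleteEdges {Sym2.mk x y}).edist s t
      = ⨅ v ∈ N.verts,
          ((G.deleteEdges {e : Sym2 V | ∀ z ∈ e, z ∈ N.verts}).edist s v
            + ((inducedOn G N.verts).deleteEdges {Sym2.mk x y}).edist v t) := by
  set G1 := G.deleteEdges {Sym2.mk x y} with hG1
  set G2 := G.deleteEdges {e : Sym2 V | ∀ z ∈ e, z ∈ N.verts} with hG2
  set G3 := (inducedOn G N.verts).deleteEdges {Sym2.mk x y} with hG3
  have hG2le : G2 ≤ G1 := by
    apply SimpleGraph.deleteEdges_anti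
    intro e he
    rw [Set.mem_singleton_iff] at he
    subst he
    intro z hz
    rcases Sym2.mem_iff.mp hz with rfl | rfl
    · exact hxN
    · exact hyN
  have hG3le : G3 ≤ G1 := by
    intro a b hab
    rw [hG3, SimpleGraph.deleteEdges_adj] at hab
    rw [hG1, SimpleGraph.deleteEdges_adj]
    exact ⟨hab.1.1, hab.2⟩
  have hB : ∀ w ∈ M.verts, G2.edist s w ≤ G.edist s w := by
    intro w hw
    obtain ⟨p, hpe, hpl⟩ := tree_walk_in_subgraph hT hMc hsM hw
    have hpe2 : ∀ e ∈ p.edges, e ∈ G2.edgeSet := by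
      intro e he
      have hM := hpe e he
      revert hM
      refine Sym2.ind (fun a b hM => ?_) e
      rw [SimpleGraph.Subgraph.mem_edgeSet] at hM
      rw [SimpleGraph.mem_edgeSet, hG2, SimpleGraph.deleteEdges_adj]
      refine ⟨hTG (M.adj_sub hM), ?_⟩
      intro hall
      have ha : a ∈ N.verts := hall a (Sym2.mem_mk_left a b)
      have hb : b ∈ N.verts := hall b (Sym2.mem_mk_right a b)
      have har : a ∈ ({r} : Set V) := hVinter ▸ ⟨M.edge_vert hM, ha⟩
      have hbr : b ∈ ({r} : Set V) := hVinter ▸ ⟨M.edge_vert hM.symm, hb⟩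
      rw [Set.mem_singleton_iff] at har hbr
      exact (hTG (M.adj_sub hM)).ne (har.trans hbr.symm)
    calc G2.edist s w ≤ (p.transfer G2 hpe2).length := SimpleGraph.edist_le _
      _ = (p.length : ℕ∞) := by rw [SimpleGraph.Walk.length_transfer]
      _ = T.edist s w := hpl
      _ = G.edist s w := hSPT w
  have key : ∀ (a b : V) (P : G1.Walk a b), b = s → a ∈ N.verts →
      (⨅ u ∈ N.verts, (G2.edist s u + G3.edist u a)) ≤ P.length := by
    intro a b P
    induction P with
    | @nil a =>
      intro hbs hsN
      calc (⨅ u ∈ N.verts, (G2.edist s u + G3.edist u a))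
          ≤ G2.edist s a + G3.edist a a := iInf₂_le a hsN
        _ = 0 := by rw [SimpleGraph.edist_self, add_zero, hbs, SimpleGraph.edist_self]
        _ ≤ _ := by simp
    | @cons v w b h q ih =>
      intro hbs hvN
      have hG1adj : G.Adj v w ∧ Sym2.mk v w ∉ ({Sym2.mk x y} : Set (Sym2 V)) := by
        rwa [hG1, SimpleGraph.deleteEdges_adj] at h
      by_cases hwN : w ∈ N.verts
      · have hFw := ih hbs hwN
        have hadj : G3.Adj v w := by
          rw [hG3, SimpleGraph.deleteEdges_adj]
          exact ⟨⟨hG1adj.1, hvN, hwN⟩, hG1adj.2⟩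
        have hne : ((q.length : ℕ∞)) ≠ ⊤ := ENat.coe_ne_top _
        have hlt : (⨅ u ∈ N.verts, (G2.edist s u + G3.edist u w)) < (q.length : ℕ∞) + 1 :=
          lt_of_le_of_lt hFw ((ENat.lt_add_one_iff hne).mpr le_rfl)
        rw [iInf_lt_iff] at hlt
        obtain ⟨u, hlt⟩ := hlt
        rw [iInf_lt_iff] at hlt
        obtain ⟨huN, hlt⟩ := hlt
        have hle : G2.edist s u + G3.edist u w ≤ (q.length : ℕ∞) :=
          (ENat.lt_add_one_iff hne).mp hlt
        have h31 : G3.edist w v ≤ 1 := by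
          rw [SimpleGraph.edist_comm]
          exact le_of_eq (SimpleGraph.edist_eq_one_iff_adj.mpr hadj)
        calc (⨅ u ∈ N.verts, (G2.edist s u + G3.edist u v))
            ≤ G2.edist s u + G3.edist u v := iInf₂_le u huN
          _ ≤ G2.edist s u + (G3.edist u w + G3.edist w v) :=
              add_le_add_right SimpleGraph.edist_triangle _
          _ = (G2.edist s u + G3.edist u w) + G3.edist w v := (add_assoc _ _ _).symm
          _ ≤ (q.length : ℕ∞) + 1 := add_le_add hle h31
          _ = ((SimpleGraph.Walk.cons h q).length : ℕ∞) := by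
              rw [SimpleGraph.Walk.length_cons]; push_cast; rfl
      · have hwM : w ∈ M.verts := by
          have hmem : w ∈ M.verts ∪ N.verts := hVunion.ge (Set.mem_univ w)
          rcases hmem with h' | h'
          · exact h'
          · exact absurd h' hwN
        have hadj2 : G2.Adj v w := by
          rw [hG2, SimpleGraph.deleteEdges_adj]
          refine ⟨hG1adj.1, ?_⟩
          intro hall
          exact hwN (hall w (Sym2.mem_mk_right v w))
        have h21 : G2.edist w v ≤ 1 := by
          rw [SimpleGraph.edist_comm]
          exact le_of_eq (SimpleGraph.edist_eq_one_iff_adj.mpr hadj2)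
        have hGsw : G.edist s w ≤ (q.length : ℕ∞) := by
          have hq1 : G1.edist w b ≤ (q.length : ℕ∞) := SimpleGraph.edist_le q
          have hws : G1.edist w s = G1.edist w b := by rw [hbs]
          calc G.edist s w = G.edist w s := SimpleGraph.edist_comm
            _ ≤ G1.edist w s := SimpleGraph.edist_anti (SimpleGraph.deleteEdges_le _)
            _ = G1.edist w b := hws
            _ ≤ (q.length : ℕ∞) := hq1
        calc (⨅ u ∈ N.verts, (G2.edist s u + G3.edist u v))
            ≤ G2.edist s v + G3.edist v v := iInf₂_le v hvN
          _ = G2.edist s v := by rw [SimpleGraph.edist_self, add_zero]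
          _ ≤ G2.edist s w + G2.edist w v := SimpleGraph.edist_triangle
          _ ≤ G.edist s w + 1 := add_le_add (hB w hwM) h21
          _ ≤ (q.length : ℕ∞) + 1 := add_le_add_left hGsw 1
          _ = ((SimpleGraph.Walk.cons h q).length : ℕ∞) := by
              rw [SimpleGraph.Walk.length_cons]; push_cast; rfl
  refine le_antisymm ?_ ?_
  · refine le_iInf₂ fun v hv => ?_
    calc G1.edist s t ≤ G1.edist s v + G1.edist v t := SimpleGraph.edist_triangle
      _ ≤ G2.edist s v + G3.edist v t :=
          add_le_add (SimpleGraph.edist_anti hG2le) (SimpleGraph.edist_anti hG3le)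
  · by_cases htop : G1.edist s t = ⊤
    · rw [htop]; exact le_top
    · obtain ⟨W, hW⟩ := SimpleGraph.exists_walk_of_edist_ne_top htop
      have hk := key t s W.reverse rfl ht
      rw [SimpleGraph.Walk.length_reverse] at hk
      exact hW ▸ hk
end

section
/- Under the shortest-path-tree separator setup, let e be an edge of the induced subgraph G_N = G[V_N] and let t ∈ V_M. Then d_{G∖e}(s,t) = d_G(s,t). -/
open SimpleGraph

/-- Under the shortest-path-tree separator setup, let `e = {x,y}` be an edge
of the induced subgraph `G_N = G[V_N]` and let `t ∈ V_M`.  Then `d_{G∖e}(s,t) = d_G(s,t)`. -/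
theorem stmt_9 {V : Type*} [Fintype V] (G : SimpleGraph V) (hG : G.Connected)
    (s r : V) (T : SimpleGraph V) (hTG : T ≤ G) (hT : T.IsTree)
    (hSPT : ∀ v : V, T.edist s v = G.edist s v)
    (M N : T.Subgraph) (hMc : M.Connected) (hNc : N.Connected)
    (hEdisj : Disjoint M.edgeSet N.edgeSet)
    (hEunion : M.edgeSet ∪ N.edgeSet = T.edgeSet)
    (hVunion : M.verts ∪ N.verts = Set.univ)
    (hVinter : M.verts ∩ N.verts = {r})
    (hsM : s ∈ M.verts)
    (x y : V) (hxyAdj : G.Adj x y) (hxN : x ∈ N.verts) (hyN : y ∈ N.verts)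
    (t : V) (ht : t ∈ M.verts) :
    (G.deleteEdges {Sym2.mk x y}).edist s t = G.edist s t := by
  classical
  set e : Sym2 V := Sym2.mk x y with he
  have heM : e ∉ M.edgeSet := by
    intro h
    rw [he, Subgraph.mem_edgeSet] at h
    have hx : x ∈ M.verts := M.edge_vert h
    have hy : y ∈ M.verts := M.edge_vert h.symm
    have hxr : x = r := by
      have : x ∈ M.verts ∩ N.verts := ⟨hx, hxN⟩
      rwa [hVinter] at this
    have hyr : y = r := by
      have : y ∈ M.verts ∩ N.verts := ⟨hy, hyN⟩
      rwa [hVinter] at this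
    exact hxyAdj.ne (hxr.trans hyr.symm)
  refine le_antisymm ?_ (edist_anti (deleteEdges_le _))
  obtain ⟨w⟩ := hMc ⟨s, hsM⟩ ⟨t, ht⟩
  let p : T.Path s t := (w.map M.hom).toPath
  have hpM : ∀ e' ∈ (p : T.Walk s t).edges, e' ∈ M.edgeSet := by
    intro e' he'
    have h1 : e' ∈ (w.map M.hom).edges := Walk.edges_toPath_subset _ he'
    rw [Walk.edges_map] at h1
    obtain ⟨e₀, he₀, rfl⟩ := List.mem_map.mp h1
    induction e₀ with
    | _ a b =>
      have hadj : M.coe.Adj a b := Walk.adj_of_mem_edges _ he₀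
      exact hadj
  have hpG : ∀ e' ∈ (p : T.Walk s t).edges, e' ∈ (G.deleteEdges {e}).edgeSet := by
    intro e' he'
    rw [edgeSet_deleteEdges]
    refine ⟨edgeSet_mono hTG (M.edgeSet_subset (hpM e' he')), ?_⟩
    simp only [Set.mem_singleton_iff]
    intro hco
    exact heM (hco ▸ hpM e' he')
  let q := (p : T.Walk s t).transfer (G.deleteEdges {e}) hpG
  obtain ⟨sp, hsp⟩ := (hT.isConnected s t).exists_walk_length_eq_edist
  have hspPath : sp.IsPath :=
    sp.isPath_of_length_eq_dist (by rw [SimpleGraph.dist, ← hsp, ENat.toNat_coe])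
  have hpe : (p : T.Walk s t) = sp := (hT.existsUnique_path s t).unique p.2 hspPath
  calc (G.deleteEdges {e}).edist s t ≤ (q.length : ℕ∞) := edist_le q
    _ = ((p : T.Walk s t).length : ℕ∞) := by rw [Walk.length_transfer]
    _ = T.edist s t := by rw [hpe, hsp]
    _ = G.edist s t := hSPT t
end
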